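/- Let A₁, A₂ : ℝ → ℂ be differentiable functions satisfying i A₁' = |A₂|² A₂ and i A₂' = |A₁|² A₁. Then the quantity Re(conj(A₁(t)) · A₂(t)) is constant in t. -/

import Mathlib

/-!
Differentiating, `(conj A₁ * A₂)' = conj A₁' * A₂ + conj A₁ * A₂'`. The equation
`i A₁' = |A₂|² A₂` makes `conj A₁' * A₂ = i |A₂|⁴` purely imaginary, and symmetrically
`conj A₁ * A₂'` is the conjugate of `conj A₂' * A₁ = i |A₁|⁴`. So the real part of the
derivative vanishes and the real part of `conj A₁ * A₂` is constant.
-/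

open Complex ComplexConjugate

theorem Complex.re_conj_mul_eq_zero_of_I_mul_eq {w z : ℂ} {r : ℝ} (h : I * w = r * z) :
    (conj w * z).re = 0 := by
  have hw : w = -I * (r * z) := by linear_combination -I * h + w * I_sq
  have hprod : conj w * z = I * (r * normSq z : ℝ) := by
    rw [hw, ofReal_mul, normSq_eq_conj_mul_self]
    simp only [map_mul, map_neg, conj_I, conj_ofReal]
    ring
  simp [hprod]

theorem re_eq_of_hasDerivAt_of_re_deriv_eq_zero {f f' : ℝ → ℂ}
    (hf : ∀ t, HasDerivAt f (f' t) t) (hre : ∀ t, (f' t).re = 0) (s t : ℝ) :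
    (f s).re = (f t).re := by
  have hderiv : ∀ t, HasDerivAt (fun t => (f t).re) 0 t := fun t =>
    (reCLM.hasFDerivAt.comp_hasDerivAt t (hf t)).congr_deriv (by simp [hre t])
  exact is_const_of_deriv_eq_zero (fun t => (hderiv t).differentiableAt)
    (fun t => (hderiv t).deriv) s t

theorem stmt2 (A₁ A₂ A₁' A₂' : ℝ → ℂ)
    (hd₁ : ∀ t, HasDerivAt A₁ (A₁' t) t)
    (hd₂ : ∀ t, HasDerivAt A₂ (A₂' t) t)
    (hode₁ : ∀ t, Complex.I * A₁' t = (Complex.normSq (A₂ t) : ℂ) * A₂ t)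
    (hode₂ : ∀ t, Complex.I * A₂' t = (Complex.normSq (A₁ t) : ℂ) * A₁ t) :
    ∀ s t : ℝ,
      ((starRingEnd ℂ) (A₁ s) * A₂ s).re = ((starRingEnd ℂ) (A₁ t) * A₂ t).re := by
  refine re_eq_of_hasDerivAt_of_re_deriv_eq_zero (fun t => (hd₁ t).star.mul (hd₂ t)) fun t => ?_
  have h₁ := re_conj_mul_eq_zero_of_I_mul_eq (hode₁ t)
  have h₂ := re_conj_mul_eq_zero_of_I_mul_eq (hode₂ t)
  rw [← conj_re, map_mul, conj_conj, mul_comm] at h₂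
  show (conj (A₁' t) * A₂ t + conj (A₁ t) * A₂' t).re = 0
  rw [add_re, h₁, h₂, add_zero]
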